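/- Let N be a positive integer and d ≥ 0 an integer with −d a square modulo 4N, and let β mod 2N satisfy β² ≡ −d (mod 4N). If d is not divisible as a discriminant by the square of any prime dividing N, then the natural map from Q_{d,N,β}/Γ₀(N) to Q_d/Γ (sending a class of forms to its SL₂(ℤ)-class) is a bijection. -/

import Mathlib

/-- An integral binary quadratic form `[a,b,c] = aX² + bXY + cY²`. -/
structure BQF where
  a : ℤ
  b : ℤ
  c : ℤ
deriving DecidableEq

/-- The discriminant `b² − 4ac` of a binary quadratic form. -/
def BQF.disc (Q : BQF) : ℤ := Q.b ^ 2 - 4 * Q.a * Q.c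

/-- Positive definiteness of a binary quadratic form. -/
def BQF.IsPosDef (Q : BQF) : Prop := 0 < Q.a ∧ Q.disc < 0

/-- The (right) action `Q ∘ g` of `SL₂(ℤ)` on binary quadratic forms,
`(Q ∘ g)(x,y) = Q(αx + βy, γx + δy)` for `g = (α,β;γ,δ)`. -/
def BQF.act (Q : BQF) (g : Matrix.SpecialLinearGroup (Fin 2) ℤ) : BQF :=
  ⟨Q.a * (g.1 0 0) ^ 2 + Q.b * (g.1 0 0) * (g.1 1 0) + Q.c * (g.1 1 0) ^ 2,
   2 * Q.a * (g.1 0 0) * (g.1 0 1) + Q.b * ((g.1 0 0) * (g.1 1 1) + (g.1 0 1) * (g.1 1 0))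
     + 2 * Q.c * (g.1 1 0) * (g.1 1 1),
   Q.a * (g.1 0 1) ^ 2 + Q.b * (g.1 0 1) * (g.1 1 1) + Q.c * (g.1 1 1) ^ 2⟩

/-- `Q ∈ 𝒬_d`: positive definite of discriminant `−d`. -/
def BQF.mem (d : ℤ) (Q : BQF) : Prop := Q.IsPosDef ∧ Q.disc = -d

/-- `Q ∈ 𝒬_{d,N,β}`: positive definite of discriminant `−d` with `N ∣ a` and
`b ≡ β (mod 2N)`. -/
def BQF.memN (d : ℤ) (N : ℕ) (β : ℤ) (Q : BQF) : Prop :=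
  Q.mem d ∧ (N : ℤ) ∣ Q.a ∧ Q.b ≡ β [ZMOD (2 * N)]

/-- Equivalence of forms under a subgroup `G` of `SL₂(ℤ)`. -/
def BQF.equiv (G : Subgroup (Matrix.SpecialLinearGroup (Fin 2) ℤ)) (Q Q' : BQF) : Prop :=
  ∃ g ∈ G, Q.act g = Q'

/-- `d` is divisible as a discriminant by `f²`: `d/f²` is an integer which is
again a discriminant (≡ 0 or 3 mod 4, since the forms have discriminant `−d`,
i.e. `−(d/f²)` is a discriminant). -/
def DiscDivisible (d : ℤ) (f : ℤ) : Prop :=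
  (f ^ 2 ∣ d) ∧ ((d / f ^ 2) % 4 = 0 ∨ (d / f ^ 2) % 4 = 3)

section Aux

/-!
A form of discriminant `−d` all of whose coefficients are divisible by a prime `p` exhibits `d`
as divisible as a discriminant by `p²`; so the hypothesis says that no prime of `N` divides all
three coefficients. Choosing `x, y` prime-by-prime, such a form then represents, properly, a
number prime to `N`: every class contains `[a, b, c]` with `a` prime to `N`. A translation
`T ^ t` makes `b ≡ −β (mod 2N)`, which together with `β² ≡ −d (mod 4N)` forces `N ∣ c`, and
`S` swaps `a` and `c`.

Conversely, if `Q ∘ g = Q'` with `Q, Q' ∈ 𝒬_{d,N,β}` and `g = (α, β'; γ, δ)`, then comparing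
the first coefficients and the middle coefficients modulo `N` gives `N ∣ γX` and `N ∣ γY` for
`(X, Y) = (bα + cγ, bβ' + cδ)`. Since `(b, c)` is recovered from `(X, Y)` by `g⁻¹`, a prime of `N`
dividing `X` and `Y` would divide `a`, `b`, `c`; hence `N ∣ γ`, i.e. `g ∈ Γ₀(N)`.
-/

open ModularGroup MatrixGroups

lemma Matrix.SpecialLinearGroup.SL2_det_eq_one {R : Type*} [CommRing R] (g : SL(2, R)) :
    g.1 0 0 * g.1 1 1 - g.1 0 1 * g.1 1 0 = 1 := by
  rw [← Matrix.det_fin_two]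
  exact g.det_coe

lemma Matrix.SpecialLinearGroup.exists_SL2_col_eq {R : Type*} [CommRing R] {x y : R}
    (hxy : IsCoprime x y) : ∃ g : SL(2, R), g.1 0 0 = x ∧ g.1 1 0 = y := by
  obtain ⟨u, v, h⟩ := hxy
  exact ⟨⟨!![x, -v; y, u], by simp [Matrix.det_fin_two]; linear_combination h⟩, rfl, rfl⟩

lemma Int.isCoprime_natCast_of_forall_prime {m : ℤ} {N : ℕ}
    (h : ∀ p : ℕ, p.Prime → p ∣ N → ¬ (p : ℤ) ∣ m) : IsCoprime m N := by
  rw [Int.isCoprime_iff_nat_coprime, Int.natAbs_natCast]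
  exact Nat.coprime_of_dvd fun p hp hpm hpN => h p hp hpN (Int.natCast_dvd.mpr hpm)

lemma Int.natCast_dvd_prod_primes_iff {S : Finset ℕ} (hS : ∀ p ∈ S, p.Prime) {q : ℕ}
    (hq : q.Prime) : (q : ℤ) ∣ ∏ p ∈ S, (p : ℤ) ↔ q ∈ S := by
  rw [← Nat.cast_prod, Int.natCast_dvd_natCast, hq.prime.dvd_finsetProd_iff]
  refine ⟨fun ⟨p, hp, hqp⟩ => ?_, fun h => ⟨q, h, dvd_rfl⟩⟩
  rwa [(Nat.prime_dvd_prime_iff_eq hq (hS p hp)).mp hqp]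

lemma Int.dvd_of_dvd_mul_of_isCoprime_gcd {n γ x y : ℤ} (hx : n ∣ γ * x) (hy : n ∣ γ * y)
    (h : IsCoprime n (x.gcd y)) : n ∣ γ := by
  refine h.dvd_of_dvd_mul_right ?_
  rw [Int.gcd_eq_gcd_ab, mul_add, ← mul_assoc, ← mul_assoc]
  exact dvd_add (hx.mul_right _) (hy.mul_right _)

namespace BQF

def eval (Q : BQF) (x y : ℤ) : ℤ := Q.a * x ^ 2 + Q.b * x * y + Q.c * y ^ 2

def IsPrimitiveAt (N : ℕ) (Q : BQF) : Prop :=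
  ∀ p : ℕ, p.Prime → p ∣ N → ¬ ((p : ℤ) ∣ Q.a ∧ (p : ℤ) ∣ Q.b ∧ (p : ℤ) ∣ Q.c)

section Action

variable (Q : BQF) (g : SL(2, ℤ))

lemma act_a : (Q.act g).a = Q.eval (g.1 0 0) (g.1 1 0) := rfl

lemma disc_act : (Q.act g).disc = Q.disc := by
  simp only [act, disc]
  linear_combination (Q.b ^ 2 - 4 * Q.a * Q.c) * (g.1 0 0 * g.1 1 1 - g.1 0 1 * g.1 1 0 + 1) *
    g.SL2_det_eq_one

lemma act_mul (h : SL(2, ℤ)) : Q.act (g * h) = (Q.act g).act h := by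
  simp only [act, Matrix.SpecialLinearGroup.coe_mul, Matrix.mul_apply, Fin.sum_univ_two, mk.injEq]
  refine ⟨?_, ?_, ?_⟩ <;> ring

lemma act_T_zpow_a (t : ℤ) : (Q.act (T ^ t)).a = Q.a := by
  simp [act, coe_T_zpow]

lemma act_T_zpow_b (t : ℤ) : (Q.act (T ^ t)).b = Q.b + 2 * Q.a * t := by
  simp [act, coe_T_zpow]
  ring

lemma act_S : Q.act S = ⟨Q.c, -Q.b, Q.a⟩ := by
  simp [act, coe_S]

end Action

lemma IsPosDef.eval_pos {Q : BQF} (hQ : Q.IsPosDef) {x y : ℤ} (hxy : x ≠ 0 ∨ y ≠ 0) :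
    0 < Q.eval x y := by
  obtain ⟨ha, hdisc⟩ := hQ
  unfold disc at hdisc
  unfold eval
  rcases eq_or_ne y 0 with rfl | hy
  · have : 0 < x ^ 2 := by have := hxy.resolve_right (by simp); positivity
    nlinarith
  · have : 0 < y ^ 2 := by positivity
    nlinarith [sq_nonneg (2 * Q.a * x + Q.b * y)]

lemma mem.act {d : ℤ} {Q : BQF} (hQ : Q.mem d) (g : SL(2, ℤ)) : (Q.act g).mem d := by
  obtain ⟨⟨ha, hdisc⟩, hd⟩ := hQ
  have hcol : g.1 0 0 ≠ 0 ∨ g.1 1 0 ≠ 0 := by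
    by_contra! h
    simpa [h.1, h.2] using g.SL2_det_eq_one
  exact ⟨⟨IsPosDef.eval_pos ⟨ha, hdisc⟩ hcol, by rwa [disc_act]⟩, by rwa [disc_act]⟩

lemma discDivisible_of_dvd_coeffs {Q : BQF} {d f : ℤ} (hf : f ≠ 0) (hQ : Q.disc = -d)
    (ha : f ∣ Q.a) (hb : f ∣ Q.b) (hc : f ∣ Q.c) : DiscDivisible d f := by
  obtain ⟨a, ha⟩ := ha
  obtain ⟨b, hb⟩ := hb
  obtain ⟨c, hc⟩ := hc
  have hd : d = f ^ 2 * (4 * a * c - b ^ 2) := by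
    simp only [disc, ha, hb, hc] at hQ
    linear_combination hQ
  refine ⟨⟨_, hd⟩, ?_⟩
  rw [hd, Int.mul_ediv_cancel_left _ (pow_ne_zero 2 hf)]
  rcases Int.even_or_odd b with ⟨m, rfl⟩ | hodd
  · left
    ring_nf
    omega
  · right
    have := Int.sq_mod_four_eq_one_of_odd hodd
    have : 4 ∣ 4 * a * c := ⟨a * c, by ring⟩
    omega

lemma isPrimitiveAt_of_not_discDivisible {d : ℤ} {N : ℕ}
    (hd : ∀ l : ℕ, l.Prime → (l : ℤ) ∣ N → ¬ DiscDivisible d l) {Q : BQF} (hQ : Q.disc = -d) :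
    Q.IsPrimitiveAt N := fun p hp hpN ⟨ha, hb, hc⟩ =>
  hd p hp (Int.natCast_dvd_natCast.mpr hpN)
    (discDivisible_of_dvd_coeffs (by exact_mod_cast hp.ne_zero) hQ ha hb hc)

lemma not_dvd_eval {Q : BQF} {q : ℕ} (hq : q.Prime)
    (hprim : ¬ ((q : ℤ) ∣ Q.a ∧ (q : ℤ) ∣ Q.b ∧ (q : ℤ) ∣ Q.c)) {x y : ℤ}
    (hx : (q : ℤ) ∣ x ↔ (q : ℤ) ∣ Q.a ∧ ¬ (q : ℤ) ∣ Q.c) (hy : (q : ℤ) ∣ y ↔ ¬ (q : ℤ) ∣ Q.a) :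
    ¬ (q : ℤ) ∣ Q.eval x y := by
  have := Fact.mk hq
  simp only [← ZMod.intCast_zmod_eq_zero_iff_dvd] at hx hy hprim ⊢
  push_cast [eval]
  -- modulo `q` exactly one of the monomials `a x²`, `b x y`, `c y²` survives
  by_cases ha : (Q.a : ZMod q) = 0 <;> by_cases hc : (Q.c : ZMod q) = 0 <;> simp_all

lemma IsPrimitiveAt.exists_eval_isCoprime {N : ℕ} (hN : N ≠ 0) {Q : BQF}
    (hQ : Q.IsPrimitiveAt N) : ∃ x y : ℤ, IsCoprime x y ∧ IsCoprime (Q.eval x y) N := by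
  classical
  let A := N.primeFactors.filter fun p : ℕ => (p : ℤ) ∣ Q.a ∧ ¬ (p : ℤ) ∣ Q.c
  let B := N.primeFactors.filter fun p : ℕ => ¬ (p : ℤ) ∣ Q.a
  have hA : ∀ p ∈ A, p.Prime := fun p hp =>
    Nat.prime_of_mem_primeFactors (Finset.mem_filter.mp hp).1
  have hB : ∀ p ∈ B, p.Prime := fun p hp =>
    Nat.prime_of_mem_primeFactors (Finset.mem_filter.mp hp).1
  refine ⟨∏ p ∈ A, (p : ℤ), ∏ p ∈ B, (p : ℤ), ?_, ?_⟩
  · refine IsCoprime.prod_left fun p hp => IsCoprime.prod_right fun q hq => ?_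
    rw [Nat.isCoprime_iff_coprime, Nat.coprime_primes (hA p hp) (hB q hq)]
    rintro rfl
    exact (Finset.mem_filter.mp hq).2 (Finset.mem_filter.mp hp).2.1
  · refine Int.isCoprime_natCast_of_forall_prime fun q hq hqN =>
      not_dvd_eval hq (hQ q hq hqN) ?_ ?_
    · rw [Int.natCast_dvd_prod_primes_iff hA hq, Finset.mem_filter,
        and_iff_right (Nat.mem_primeFactors.mpr ⟨hq, hqN, hN⟩)]
    · rw [Int.natCast_dvd_prod_primes_iff hB hq, Finset.mem_filter,
        and_iff_right (Nat.mem_primeFactors.mpr ⟨hq, hqN, hN⟩)]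

lemma IsPrimitiveAt.exists_act_a_isCoprime {N : ℕ} (hN : N ≠ 0) {Q : BQF}
    (hQ : Q.IsPrimitiveAt N) : ∃ g : SL(2, ℤ), IsCoprime (Q.act g).a N := by
  obtain ⟨x, y, hxy, hval⟩ := hQ.exists_eval_isCoprime hN
  obtain ⟨g, hx, hy⟩ := Matrix.SpecialLinearGroup.exists_SL2_col_eq hxy
  exact ⟨g, by rwa [act_a, hx, hy]⟩

lemma even_b_add_of_disc_eq {Q : BQF} {d β : ℤ} {N : ℕ} (hβ : β ^ 2 ≡ -d [ZMOD 4 * N])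
    (hQ : Q.disc = -d) : Even (Q.b + β) := by
  have h2 : (2 : ℤ) ∣ β ^ 2 - Q.b ^ 2 := by
    obtain ⟨k, hk⟩ := hβ.dvd
    exact ⟨-2 * N * k - 2 * Q.a * Q.c, by simp only [disc] at hQ; linear_combination -hk - hQ⟩
  have : Even (β ^ 2 - Q.b ^ 2) := even_iff_two_dvd.mpr h2
  simpa [Int.even_sub, Int.even_add, parity_simps, iff_comm] using this

lemma dvd_c_of_b_modEq_neg {Q : BQF} {d β : ℤ} {N : ℕ} (hβ : β ^ 2 ≡ -d [ZMOD 4 * N])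
    (hQ : Q.disc = -d) (hb : Q.b ≡ -β [ZMOD 2 * N]) (ha : IsCoprime Q.a N) : (N : ℤ) ∣ Q.c := by
  obtain ⟨k, hk⟩ := hb.dvd
  obtain ⟨l, hl⟩ := hβ.dvd
  have hac : 4 * (Q.a * Q.c) = 4 * (N * (k * β + N * k ^ 2 - l)) := by
    simp only [disc] at hQ
    linear_combination -hQ - hl + (β + 2 * N * k - Q.b) * hk
  exact ha.symm.dvd_of_dvd_mul_left ⟨_, mul_left_cancel₀ four_ne_zero hac⟩

lemma exists_act_memN_of_isCoprime {d β : ℤ} {N : ℕ} (hβ : β ^ 2 ≡ -d [ZMOD 4 * N]) {Q : BQF}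
    (hQ : Q.mem d) (ha : IsCoprime Q.a N) : ∃ g : SL(2, ℤ), (Q.act g).memN d N β := by
  obtain ⟨s, hs⟩ := even_b_add_of_disc_eq hβ hQ.2
  obtain ⟨u, v, huv⟩ := ha
  -- `u` inverts `a` modulo `N`, so `b + 2at = (b + β) − 2asu ≡ −β (mod 2N)`
  set t := -(s * u)
  set Q' := Q.act (T ^ t)
  have ha' : Q'.a = Q.a := act_T_zpow_a _ _
  have hb' : Q'.b ≡ -β [ZMOD 2 * N] := by
    rw [act_T_zpow_b, Int.modEq_iff_dvd]
    exact ⟨-(s * v), by linear_combination -hs + (2 * s) * huv⟩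
  have hc' : (N : ℤ) ∣ Q'.c := dvd_c_of_b_modEq_neg hβ (hQ.act _).2 hb' (ha' ▸ ⟨u, v, huv⟩)
  have hQ'' := hQ.act (T ^ t * S)
  rw [act_mul, act_S] at hQ''
  refine ⟨T ^ t * S, ?_⟩
  rw [act_mul, act_S]
  exact ⟨hQ'', hc', by simpa using hb'.neg⟩

lemma IsPrimitiveAt.dvd_of_act_eq {N : ℕ} {Q Q' : BQF} (hQ : Q.IsPrimitiveAt N)
    (ha : (N : ℤ) ∣ Q.a) (ha' : (N : ℤ) ∣ Q'.a) (hb : Q.b ≡ Q'.b [ZMOD 2 * N])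
    {g : SL(2, ℤ)} (hg : Q.act g = Q') : (N : ℤ) ∣ g.1 1 0 := by
  have hdet := g.SL2_det_eq_one
  set α := g.1 0 0
  set β' := g.1 0 1
  set γ := g.1 1 0
  set δ := g.1 1 1
  set X := Q.b * α + Q.c * γ
  set Y := Q.b * β' + Q.c * δ
  have hX : (N : ℤ) ∣ γ * X := by
    have : γ * X = Q'.a - Q.a * α ^ 2 := by rw [← hg]; simp only [act]; ring
    exact this ▸ dvd_sub ha' (ha.mul_right _)
  have hY : (N : ℤ) ∣ γ * Y := by
    obtain ⟨k, hk⟩ := hb.dvd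
    rw [← hg] at hk
    simp only [act] at hk
    have : 2 * (γ * Y) = 2 * (N * k - Q.a * α * β') := by linear_combination hk - Q.b * hdet
    rw [mul_left_cancel₀ two_ne_zero this]
    exact dvd_sub (dvd_mul_right _ _) ((ha.mul_right _).mul_right _)
  refine Int.dvd_of_dvd_mul_of_isCoprime_gcd hX hY
    (Int.isCoprime_natCast_of_forall_prime fun p hp hpN hpXY => ?_).symm
  have hpX : (p : ℤ) ∣ X := hpXY.trans (Int.gcd_dvd_left X Y)
  have hpY : (p : ℤ) ∣ Y := hpXY.trans (Int.gcd_dvd_right X Y)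
  have hb : Q.b = δ * X - γ * Y := by linear_combination -Q.b * hdet
  have hc : Q.c = α * Y - β' * X := by linear_combination -Q.c * hdet
  refine hQ p hp hpN ⟨(Int.natCast_dvd_natCast.mpr hpN).trans ha, ?_, ?_⟩
  · exact hb ▸ dvd_sub (hpX.mul_left _) (hpY.mul_left _)
  · exact hc ▸ dvd_sub (hpY.mul_left _) (hpX.mul_left _)

end BQF

theorem natural_map_bijective_general (N : ℕ) (hN : 0 < N) (d : ℤ) (β : ℤ)
    (hβ : β ^ 2 ≡ -d [ZMOD (4 * N)])
    (hsq : ∀ l : ℕ, l.Prime → (l : ℤ) ∣ N → ¬ DiscDivisible d l) :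
    (∀ Q : BQF, Q.mem d → ∃ g : Matrix.SpecialLinearGroup (Fin 2) ℤ,
        (Q.act g).memN d N β) ∧
    (∀ Q Q' : BQF, Q.memN d N β → Q'.memN d N β →
        (∃ g : Matrix.SpecialLinearGroup (Fin 2) ℤ, Q.act g = Q') →
        BQF.equiv (CongruenceSubgroup.Gamma0 N) Q Q') := by
  refine ⟨fun Q hQ => ?_, fun Q Q' hQ hQ' ⟨g, hg⟩ => ?_⟩
  · obtain ⟨g₁, hg₁⟩ :=
      (BQF.isPrimitiveAt_of_not_discDivisible hsq hQ.2).exists_act_a_isCoprime hN.ne'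
    obtain ⟨g₂, hg₂⟩ := BQF.exists_act_memN_of_isCoprime hβ (hQ.act g₁) hg₁
    exact ⟨g₁ * g₂, by rwa [BQF.act_mul]⟩
  · have hγ := (BQF.isPrimitiveAt_of_not_discDivisible hsq hQ.1.2).dvd_of_act_eq hQ.2.1 hQ'.2.1
      (hQ.2.2.trans hQ'.2.2.symm) hg
    exact ⟨g, CongruenceSubgroup.Gamma0_mem.mpr
      ((ZMod.intCast_zmod_eq_zero_iff_dvd _ N).mpr hγ), hg⟩

/-- **Bijectivity of `𝒬_{d,N,β}/Γ₀(N) → 𝒬_d/SL₂(ℤ)`.**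
If `−d` is a square mod `4N`, `β² ≡ −d (mod 4N)`, and `d` is not divisible as a
discriminant by the square of any prime dividing `N`, then the natural map from
`𝒬_{d,N,β}/Γ₀(N)` to `𝒬_d/Γ` is a bijection: every `SL₂(ℤ)`-class of forms of
discriminant `−d` contains a form in `𝒬_{d,N,β}`, and any two forms of
`𝒬_{d,N,β}` which are `SL₂(ℤ)`-equivalent are already `Γ₀(N)`-equivalent. -/
theorem natural_map_bijective (N : ℕ) (hN : 0 < N) (d : ℤ) (hd : 0 ≤ d) (β : ℤ)
    (hβ : β ^ 2 ≡ -d [ZMOD (4 * N)])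
    (hsq : ∀ l : ℕ, l.Prime → (l : ℤ) ∣ N → ¬ DiscDivisible d l) :
    (∀ Q : BQF, Q.mem d → ∃ g : Matrix.SpecialLinearGroup (Fin 2) ℤ,
        (Q.act g).memN d N β) ∧
    (∀ Q Q' : BQF, Q.memN d N β → Q'.memN d N β →
        (∃ g : Matrix.SpecialLinearGroup (Fin 2) ℤ, Q.act g = Q') →
        BQF.equiv (CongruenceSubgroup.Gamma0 N) Q Q') :=
  natural_map_bijective_general N hN d β hβ hsq
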